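/- With normalized product kernels K_S as above and centered kernels defined recursively by K_S^c = K_S − ∑_{R ⊊ S} K_R^c (K_∅^c = 1), for every nonempty S and every i ∈ S, the integral of t_i ↦ K_S^c(x_S, t_S) over T_i with respect to μ_i is identically zero (partial zero-mean property). -/

import Mathlib

/-!
Write `S = insert i A` with `i ∉ A`. Summing the recursion gives `∑_{R ⊆ S} K_R^c = K_S`.
Integrating in `t_i`, `∫ k_i dμ_i = 1` turns the right side into `K_A = ∑_{R ⊆ A} K_R^c`, while
on the left the terms with `R ⊆ A` do not depend on `t_i` and cancel against it. What remains is
`∑_{R ⊆ A} ∫ K_{insert i R}^c dμ_i = 0`, whose terms with `R ⊊ A` vanish by strong induction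
on `A`.
-/

open MeasureTheory Finset Function

section MobiusRecursion

variable {ι : Type*} [DecidableEq ι]

theorem sum_powerset_eq_of_eq_sub_sum_ssubsets {β : Type*} [AddCommGroup β]
    {F G : Finset ι → β} (h : ∀ S, G S = F S - ∑ R ∈ S.ssubsets, G R) (S : Finset ι) :
    ∑ R ∈ S.powerset, G R = F S := by
  -- `S.ssubsets` is by definition `S.powerset.erase S`.
  rw [← sum_erase_add _ _ (mem_powerset_self S), h S]
  exact add_sub_cancel _ _

theorem update_eq_of_eq_sub_sum_ssubsets {α : ι → Type*} {β : Type*} [AddCommGroup β]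
    {F G : Finset ι → (∀ j, α j) → β}
    (h : ∀ S t, G S t = F S t - ∑ R ∈ S.ssubsets, G R t)
    {i : ι} (hF : ∀ S, i ∉ S → ∀ t v, F S (update t i v) = F S t)
    (S : Finset ι) (hi : i ∉ S) (t : ∀ j, α j) (v : α i) :
    G S (update t i v) = G S t := by
  induction S using Finset.strongInduction with
  | _ S ih =>
    rw [h, h, hF S hi]
    congr 1
    refine sum_congr rfl fun R hR => ?_
    have hRS := mem_ssubsets.mp hR
    exact ih R hRS fun hiR => hi (hRS.subset hiR)

theorem integrable_of_eq_sub_sum_ssubsets {α : Type*} [MeasurableSpace α] {μ : Measure α}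
    {F G : Finset ι → α → ℝ} (h : ∀ S a, G S a = F S a - ∑ R ∈ S.ssubsets, G R a)
    (hF : ∀ S, Integrable (F S) μ) (S : Finset ι) : Integrable (G S) μ := by
  induction S using Finset.strongInduction with
  | _ S ih =>
    rw [show G S = fun a => F S a - ∑ R ∈ S.ssubsets, G R a from funext (h S)]
    exact (hF S).sub (integrable_finsetSum _ fun R hR => ih R (mem_ssubsets.mp hR))

end MobiusRecursion

section ProductKernel

variable {ι : Type*} [DecidableEq ι] {T : ι → Type*}

def productKernel (k : ∀ i, T i → T i → ℝ) (S : Finset ι) (x t : ∀ j, T j) : ℝ :=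
  ∏ j ∈ S, k j (x j) (t j)

variable (k : ∀ i, T i → T i → ℝ) (x t : ∀ j, T j) {i : ι} (v : T i)

theorem productKernel_update_of_notMem {S : Finset ι} (hi : i ∉ S) :
    productKernel k S x (update t i v) = productKernel k S x t := by
  simp_rw [productKernel, apply_update (fun j => k j (x j)), prod_update_of_notMem hi]

theorem productKernel_insert_update {A : Finset ι} (hi : i ∉ A) :
    productKernel k (insert i A) x (update t i v) = k i (x i) v * productKernel k A x t := by
  rw [productKernel, prod_insert hi, update_self, ← productKernel,
    productKernel_update_of_notMem k x t v hi]

theorem integrable_productKernel_update [MeasurableSpace (T i)] {μ : Measure (T i)}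
    [IsFiniteMeasure μ] (hk : Integrable (k i (x i)) μ) (S : Finset ι) :
    Integrable (fun v => productKernel k S x (update t i v)) μ := by
  by_cases hi : i ∈ S
  · rw [← insert_erase hi]
    simp_rw [productKernel_insert_update k x t _ (notMem_erase i S)]
    exact hk.mul_const _
  · simp_rw [productKernel_update_of_notMem k x t _ hi]
    exact integrable_const _

end ProductKernel

section CenteredKernel

variable {ι : Type*} [DecidableEq ι] {T : ι → Type*} {i : ι} [MeasurableSpace (T i)]
  {μ : Measure (T i)} [IsProbabilityMeasure μ] {k : ∀ i, T i → T i → ℝ}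
  {Kc : Finset ι → (∀ j, T j) → (∀ j, T j) → ℝ}

theorem sum_powerset_integral_centeredKernel_insert_update (hk : ∀ xi, Integrable (k i xi) μ)
    (hnorm : ∀ xi, ∫ v, k i xi v ∂μ = 1)
    (hKc : ∀ S x t, Kc S x t = productKernel k S x t - ∑ R ∈ S.ssubsets, Kc R x t)
    {A : Finset ι} (hi : i ∉ A) (x t : ∀ j, T j) :
    ∑ R ∈ A.powerset, ∫ v, Kc (insert i R) x (update t i v) ∂μ = 0 := by
  have hsum (S : Finset ι) (t' : ∀ j, T j) :
      ∑ R ∈ S.powerset, Kc R x t' = productKernel k S x t' :=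
    sum_powerset_eq_of_eq_sub_sum_ssubsets (hKc · x t') S
  have hlocal (R : Finset ι) (hR : R ⊆ A) (v : T i) : Kc R x (update t i v) = Kc R x t :=
    update_eq_of_eq_sub_sum_ssubsets (hKc · x)
      (fun S hS t v => productKernel_update_of_notMem k x t v hS) R (fun h => hi (hR h)) t v
  have hconst : ∑ R ∈ A.powerset, ∫ v, Kc R x (update t i v) ∂μ
      = ∑ R ∈ A.powerset, Kc R x t :=
    sum_congr rfl fun R hR => by
      simp_rw [hlocal R (mem_powerset.mp hR), integral_const, probReal_univ, one_smul]
  have hintegrable (R : Finset ι) : Integrable (fun v => Kc R x (update t i v)) μ :=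
    integrable_of_eq_sub_sum_ssubsets (fun S v => hKc S x (update t i v))
      (integrable_productKernel_update k x t (hk (x i))) R
  have := calc
    ∑ R ∈ (insert i A).powerset, ∫ v, Kc R x (update t i v) ∂μ
        = ∫ v, productKernel k (insert i A) x (update t i v) ∂μ := by
          rw [← integral_finsetSum _ fun R _ => hintegrable R]
          simp_rw [hsum]
      _ = ∑ R ∈ A.powerset, Kc R x t := by
          simp_rw [productKernel_insert_update k x t _ hi, integral_mul_const, hnorm, one_mul,
            hsum]
  rwa [sum_powerset_insert hi, hconst, add_eq_left] at this

theorem integral_centeredKernel_insert_update (hk : ∀ xi, Integrable (k i xi) μ)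
    (hnorm : ∀ xi, ∫ v, k i xi v ∂μ = 1)
    (hKc : ∀ S x t, Kc S x t = productKernel k S x t - ∑ R ∈ S.ssubsets, Kc R x t)
    (A : Finset ι) (hi : i ∉ A) (x t : ∀ j, T j) :
    ∫ v, Kc (insert i A) x (update t i v) ∂μ = 0 := by
  induction A using Finset.strongInduction with
  | _ A ih =>
    have hproper (R) (hR : R ∈ A.powerset) (hRA : R ≠ A) :
        ∫ v, Kc (insert i R) x (update t i v) ∂μ = 0 :=
      ih R (ssubset_of_subset_of_ne (mem_powerset.mp hR) hRA) fun h => hi (mem_powerset.mp hR h)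
    have hsum := sum_powerset_integral_centeredKernel_insert_update hk hnorm hKc hi x t
    rwa [sum_eq_single_of_mem A (mem_powerset_self A) hproper] at hsum

end CenteredKernel

theorem stmt3 (d : ℕ) (T : Fin d → Type*) [∀ i, MeasurableSpace (T i)]
    (μ : ∀ i, Measure (T i)) [∀ i, IsProbabilityMeasure (μ i)]
    (k : ∀ i, T i → T i → ℝ)
    (hmeas : ∀ i, Measurable (Function.uncurry (k i)))
    (hbdd : ∀ i, ∃ M, ∀ a b, |k i a b| ≤ M)
    (hnorm : ∀ i (xi : T i), ∫ ti, k i xi ti ∂(μ i) = 1)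
    (Kc : Finset (Fin d) → (∀ j, T j) → (∀ j, T j) → ℝ)
    (hKc : ∀ S x t, Kc S x t
      = (∏ j ∈ S, k j (x j) (t j)) - ∑ R ∈ S.ssubsets, Kc R x t) :
    ∀ S : Finset (Fin d), S.Nonempty → ∀ i ∈ S, ∀ x t : ∀ j, T j,
      ∫ ti, Kc S x (Function.update t i ti) ∂(μ i) = 0 := by
  intro S _ i hi x t
  obtain ⟨M, hM⟩ := hbdd i
  have hk (xi : T i) : Integrable (k i xi) (μ i) :=
    Integrable.of_bound (hmeas i).of_uncurry_left.aestronglyMeasurable M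
      (ae_of_all _ fun v => hM xi v)
  rw [← insert_erase hi]
  exact integral_centeredKernel_insert_update hk (hnorm i) hKc (S.erase i) (notMem_erase i S) x t
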